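/- Let 𝒯 be a locally finite tiling of ℝⁿ by convex polytopes and let x be a point of ℝⁿ. Then there exists r > 0 such that every face of every tile of 𝒯 that intersects the sphere of radius r centered at x contains x. -/

import Mathlib

open Set Metric

noncomputable section

abbrev Euc (n : ℕ) : Type := EuclideanSpace ℝ (Fin n)

/-- A convex polytope: the convex hull of a finite point set (equivalently, a bounded
intersection of finitely many closed halfspaces). -/
def IsPolytope {n : ℕ} (P : Set (Euc n)) : Prop :=
  ∃ V : Finset (Euc n), P = convexHull ℝ (V : Set (Euc n))

/-- A tiling of `ℝⁿ` by full-dimensional convex polytopes: the tiles cover `ℝⁿ` and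
have pairwise disjoint interiors. -/
def IsTiling {n : ℕ} (𝒯 : Set (Set (Euc n))) : Prop :=
  (∀ T ∈ 𝒯, IsPolytope T ∧ (interior T).Nonempty) ∧
  ⋃₀ 𝒯 = Set.univ ∧
  ∀ T ∈ 𝒯, ∀ T' ∈ 𝒯, T ≠ T' → interior T ∩ interior T' = ∅

/-- A collection of tiles is locally finite if every bounded set meets only finitely
many tiles. -/
def IsLocallyFinite {n : ℕ} (𝒯 : Set (Set (Euc n))) : Prop :=
  ∀ U : Set (Euc n), Bornology.IsBounded U → {T | T ∈ 𝒯 ∧ (T ∩ U).Nonempty}.Finite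

open Filter Topology

/-! A point `y` of a face `F` of a polytope `conv V` is a combination with positive weights of
some `S ⊆ V`, and then the whole of `conv S` lies in `F`, because `y` is interior to a segment
through any point of `conv S`. The finitely many closed sets `conv S` that miss `x` also miss a
neighbourhood of `x`; so every face meeting that neighbourhood contains `x`. Local finiteness
leaves only finitely many tiles near `x`, and a single neighbourhood works for all of them. -/

section Convex

variable {𝕜 E : Type*} [Field 𝕜] [LinearOrder 𝕜] [IsStrictOrderedRing 𝕜]
  [AddCommGroup E] [Module 𝕜 E]

theorem Finset.exists_sum_smul_mem_openSegment_of_pos {S : Finset E} {w : E → 𝕜}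
    (hw : ∀ v ∈ S, 0 < w v) (hw1 : ∑ v ∈ S, w v = 1) {u : E}
    (hu : u ∈ convexHull 𝕜 (S : Set E)) :
    ∃ u' ∈ convexHull 𝕜 (S : Set E), ∑ v ∈ S, w v • v ∈ openSegment 𝕜 u u' := by
  have hS : S.Nonempty := Finset.nonempty_of_sum_ne_zero (by rw [hw1]; exact one_ne_zero)
  set m := S.inf' hS w
  have hm : 0 < m := (Finset.lt_inf'_iff hS).mpr hw
  obtain ⟨s, hs0, hs1, rfl⟩ := (Finset.mem_convexHull' ..).mp hu
  -- `u' = (1 + m) • p - m • u` has weights `≥ m ^ 2` since `m` is the least weight of `p`,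
  -- and `p = (m • u + u') / (1 + m)`.
  refine ⟨∑ v ∈ S, ((1 + m) * w v - m * s v) • v, (Finset.mem_convexHull' ..).mpr
    ⟨_, fun v hv => ?_, ?_, rfl⟩, m / (1 + m), 1 / (1 + m), by positivity, by positivity,
    by field_simp; ring, ?_⟩
  · have hmw : m ≤ w v := Finset.inf'_le _ hv
    have hs : s v ≤ 1 := hs1 ▸ Finset.single_le_sum hs0 hv
    nlinarith [hs0 v hv]
  · simp only [Finset.sum_sub_distrib, ← Finset.mul_sum, hw1, hs1]
    ring
  · rw [Finset.smul_sum, Finset.smul_sum, ← Finset.sum_add_distrib]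
    refine Finset.sum_congr rfl fun v _ => ?_
    rw [smul_smul, smul_smul, ← add_smul]
    congr 1
    field_simp
    ring

theorem Finset.exists_subset_pos_weights_of_mem_convexHull {V : Finset E} {p : E}
    (hp : p ∈ convexHull 𝕜 (V : Set E)) :
    ∃ S ⊆ V, ∃ w : E → 𝕜, (∀ v ∈ S, 0 < w v) ∧ ∑ v ∈ S, w v = 1 ∧ ∑ v ∈ S, w v • v = p := by
  classical
  obtain ⟨w, hw0, hw1, rfl⟩ := (Finset.mem_convexHull' ..).mp hp
  refine ⟨V.filter (w · ≠ 0), Finset.filter_subset _ _, w, fun v hv => ?_,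
    by rwa [Finset.sum_filter_ne_zero], Finset.sum_filter_of_ne fun v _ h => ?_⟩
  · obtain ⟨hvV, hv0⟩ := Finset.mem_filter.mp hv
    exact (hw0 v hvV).lt_of_ne' hv0
  · intro h0
    exact h (by rw [h0, zero_smul])

theorem IsExtreme.convexHull_subset_of_sum_smul_mem {T F : Set E} (hF : IsExtreme 𝕜 T F)
    {S : Finset E} (hST : convexHull 𝕜 (S : Set E) ⊆ T) {w : E → 𝕜}
    (hw : ∀ v ∈ S, 0 < w v) (hw1 : ∑ v ∈ S, w v = 1) (hp : ∑ v ∈ S, w v • v ∈ F) :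
    convexHull 𝕜 (S : Set E) ⊆ F := fun _ hu =>
  let ⟨_, hu', hp'⟩ := S.exists_sum_smul_mem_openSegment_of_pos hw hw1 hu
  hF.left_mem_of_mem_openSegment (hST hu) (hST hu') hp hp'

end Convex

theorem Finset.eventually_forall_subset_mem_convexHull {E : Type*} [AddCommGroup E]
    [Module ℝ E] [TopologicalSpace E] [IsTopologicalAddGroup E] [ContinuousSMul ℝ E] [T2Space E]
    (V : Finset E) (x : E) :
    ∀ᶠ y in 𝓝 x, ∀ S ⊆ V, y ∈ convexHull ℝ (S : Set E) → x ∈ convexHull ℝ (S : Set E) := by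
  have hsubsets : ∀ S ∈ V.powerset, ∀ᶠ y in 𝓝 x,
      y ∈ convexHull ℝ (S : Set E) → x ∈ convexHull ℝ (S : Set E) := fun S _ => by
    by_cases hx : x ∈ convexHull ℝ (S : Set E)
    · exact .of_forall fun _ _ => hx
    · filter_upwards [(S.finite_toSet.isClosed_convexHull ℝ).isOpen_compl.mem_nhds hx]
        with y hy h
      exact absurd h hy
  filter_upwards [(eventually_all_finset _).mpr hsubsets] with y hy S hS
  exact hy S (Finset.mem_powerset.mpr hS)

theorem IsPolytope.eventually_mem_of_isExtreme {n : ℕ} {P : Set (Euc n)} (hP : IsPolytope P)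
    (x : Euc n) : ∀ᶠ y in 𝓝 x, ∀ F, IsExtreme ℝ P F → y ∈ F → x ∈ F := by
  obtain ⟨V, rfl⟩ := hP
  filter_upwards [V.eventually_forall_subset_mem_convexHull x] with y hy F hF hyF
  obtain ⟨S, hSV, w, hw, hw1, rfl⟩ := V.exists_subset_pos_weights_of_mem_convexHull (hF.subset hyF)
  exact hF.convexHull_subset_of_sum_smul_mem (convexHull_mono hSV) hw hw1 hyF
    (hy S hSV ((Finset.mem_convexHull' ..).mpr ⟨w, fun v hv => (hw v hv).le, hw1, rfl⟩))

theorem IsLocallyFinite.eventually_forall {n : ℕ} {𝒯 : Set (Set (Euc n))}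
    (h𝒯 : IsLocallyFinite 𝒯) {x : Euc n} {Q : Set (Euc n) → Euc n → Prop}
    (hQ : ∀ T ∈ 𝒯, ∀ᶠ y in 𝓝 x, Q T y) : ∀ᶠ y in 𝓝 x, ∀ T ∈ 𝒯, y ∈ T → Q T y := by
  have hnear := (eventually_all_finite (h𝒯 (ball x 1) isBounded_ball)).mpr fun T hT => hQ T hT.1
  filter_upwards [hnear, ball_mem_nhds x one_pos] with y hy hyx T hT hyT
  exact hy T ⟨hT, y, hyT, hyx⟩

theorem small_sphere_exists {n : ℕ} (𝒯 : Set (Set (Euc n)))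
    (h𝒯 : IsTiling 𝒯) (hlf : IsLocallyFinite 𝒯) (x : Euc n) :
    ∃ r > 0, ∀ T ∈ 𝒯, ∀ F : Set (Euc n), IsExtreme ℝ T F →
      (F ∩ Metric.sphere x r).Nonempty → x ∈ F := by
  obtain ⟨ε, hε, hfaces⟩ := Metric.eventually_nhds_iff.mp <|
    hlf.eventually_forall fun T hT => (h𝒯.1 T hT).1.eventually_mem_of_isExtreme x
  refine ⟨ε / 2, half_pos hε, fun T hT F hF ⟨y, hyF, hy⟩ => ?_⟩
  have hyx : dist y x < ε := by rw [mem_sphere.mp hy]; exact half_lt_self hε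
  exact hfaces hyx T hT (hF.subset hyF) F hF hyF
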